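/- Let P and P' be ⊕-bisimilar and uniform AC-MAS (over domains U and U'), let s ∈ S and s' ∈ S' be ⊕-bisimilar states, let φ be an FO-CTLK formula, and let σ and σ' be assignments equivalent for φ w.r.t. s and s'. For every temporal-epistemic run r of P, if r(0) = s and for all i ≥ 0, |U'| ≥ |adom(r(i)) ∪ adom(r(i+1)) ∪ C ∪ σ(free(φ))|, then there exists a temporal-epistemic run r' of P' such that for all i ≥ 0: (i) r'(0) = s'; (ii) r(i) ≈ r'(i); (iii) σ and σ' are equivalent for φ w.r.t. r(i) and r'(i); and (iv) if r(i) → r(i+1) then r'(i) → r'(i+1), and if r(i) ~_j r(i+1) for some agent j then r'(i) ~_j r'(i+1). -/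
import Mathlib


/-!  Common formalisation of artifact-centric multi-agent systems (AC-MAS). -/

open Set

/-- A database schema: a finite type of relation symbols, each with an arity. -/
structure Schema : Type 1 where
  Rel : Type
  [relFin : Fintype Rel]
  arity : Rel → ℕ

attribute [instance] Schema.relFin

/-- A `D`-instance over an interpretation domain `U`: every relation symbol is
interpreted as a finite set of tuples over `U`. -/
structure Inst (D : Schema) (U : Type) : Type where
  rel : ∀ r : D.Rel, Set (Fin (D.arity r) → U)
  finite : ∀ r, (rel r).Finite

/-- The active domain of an instance. -/
def Inst.adom {D : Schema} {U : Type} (I : Inst D U) : Set U :=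
  { u | ∃ (r : D.Rel) (t : Fin (D.arity r) → U), t ∈ I.rel r ∧ ∃ j, t j = u }

/-- The schema `D` together with a primed copy of every relation symbol. -/
def Schema.double (D : Schema) : Schema where
  Rel := D.Rel ⊕ D.Rel
  relFin := inferInstance
  arity := Sum.elim D.arity D.arity

/-- The disjunctive join `I ⊕ J`: unprimed symbols are interpreted as in `I`,
primed symbols as in `J`. -/
def Inst.oplus {D : Schema} {U : Type} (I J : Inst D U) : Inst D.double U where
  rel := fun r => match r with
    | .inl r₀ => I.rel r₀
    | .inr r₀ => J.rel r₀
  finite := fun r => by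
    cases r with
    | inl r₀ => exact I.finite r₀
    | inr r₀ => exact J.finite r₀

/-- Image of an instance under a map of domains. -/
def Inst.map {D : Schema} {C U : Type} (f : C → U) (I : Inst D C) : Inst D U where
  rel := fun r => (fun t => f ∘ t) '' I.rel r
  finite := fun r => (I.finite r).image _

/-! ### First-order formulas -/

/-- Terms: variables (natural numbers) or constants from `C`. -/
abbrev Term (C : Type) := ℕ ⊕ C

def Term.varsF {C : Type} : Term C → Finset ℕ
  | .inl x => {x}
  | .inr _ => ∅

def Term.constsS {C : Type} : Term C → Set C
  | .inl _ => ∅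
  | .inr c => {c}

def Term.val {C U : Type} (cst : C → U) (σ : ℕ → U) : Term C → U
  | .inl x => σ x
  | .inr c => cst c

/-- First-order formulas over schema `D`, with equality, constants from `C`
and no function symbols. -/
inductive FO (D : Schema) (C : Type) : Type where
  | eq : Term C → Term C → FO D C
  | rel : (r : D.Rel) → (Fin (D.arity r) → Term C) → FO D C
  | not : FO D C → FO D C
  | imp : FO D C → FO D C → FO D C
  | all : ℕ → FO D C → FO D C

namespace FO

variable {D : Schema} {C : Type}

/-- Free variables. -/
def free : FO D C → Finset ℕ
  | .eq t₁ t₂ => t₁.varsF ∪ t₂.varsF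
  | .rel _ ts => Finset.univ.biUnion fun j => (ts j).varsF
  | .not φ => φ.free
  | .imp φ ψ => φ.free ∪ ψ.free
  | .all x φ => φ.free.erase x

/-- All variables. -/
def vars : FO D C → Finset ℕ
  | .eq t₁ t₂ => t₁.varsF ∪ t₂.varsF
  | .rel _ ts => Finset.univ.biUnion fun j => (ts j).varsF
  | .not φ => φ.vars
  | .imp φ ψ => φ.vars ∪ ψ.vars
  | .all x φ => insert x φ.vars

/-- Constants mentioned in a formula. -/
def consts : FO D C → Set C
  | .eq t₁ t₂ => t₁.constsS ∪ t₂.constsS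
  | .rel _ ts => ⋃ j, (ts j).constsS
  | .not φ => φ.consts
  | .imp φ ψ => φ.consts ∪ ψ.consts
  | .all _ φ => φ.consts

/-- The formula mentions only relation symbols from `R`. -/
def UsesOnly (R : Set D.Rel) : FO D C → Prop
  | .eq _ _ => True
  | .rel r _ => r ∈ R
  | .not φ => φ.UsesOnly R
  | .imp φ ψ => φ.UsesOnly R ∧ ψ.UsesOnly R
  | .all _ φ => φ.UsesOnly R

/-- Satisfaction of FO-formulas, with active-domain quantification. -/
def sat {U : Type} (cst : C → U) (I : Inst D U) : (ℕ → U) → FO D C → Prop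
  | σ, .eq t₁ t₂ => t₁.val cst σ = t₂.val cst σ
  | σ, .rel r ts => (fun j => (ts j).val cst σ) ∈ I.rel r
  | σ, .not φ => ¬ sat cst I σ φ
  | σ, .imp φ ψ => sat cst I σ φ → sat cst I σ ψ
  | σ, .all x φ => ∀ u ∈ I.adom, sat cst I (Function.update σ x u) φ

end FO

/-! ### Agents and AC-MAS -/

/-- The signature of an agent: a finite set of action types with parameter counts. -/
structure AgentSig : Type 1 where
  Act : Type
  [actFin : Fintype Act]
  np : Act → ℕ

attribute [instance] AgentSig.actFin

/-- A ground action: an action type together with ground parameters. -/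
def GAct (g : AgentSig) (U : Type) : Type := Σ a : g.Act, Fin (g.np a) → U

/-- Renaming of ground-action parameters. -/
def GAct.map {g : AgentSig} {U U' : Type} (f : U → U') : GAct g U → GAct g U'
  | ⟨a, u⟩ => ⟨a, fun j => f (u j)⟩

/-- An agent: local states structured as database instances, and a protocol. -/
structure Agent (D : Schema) (g : AgentSig) (U : Type) : Type where
  L : Set (Inst D U)
  Pr : Inst D U → Set (GAct g U)

/-- A global state: one local database instance per agent `0, …, n`
(agent `0` is the environment). -/
abbrev GState (D : Schema) (n : ℕ) (U : Type) := Fin (n+1) → Inst D U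

/-- A joint (global) ground action. -/
abbrev JAct {n : ℕ} (sig : Fin (n+1) → AgentSig) (U : Type) : Type := ∀ i, GAct (sig i) U

def JAct.map {n : ℕ} {sig : Fin (n+1) → AgentSig} {U U' : Type} (f : U → U')
    (a : JAct sig U) : JAct sig U' := fun i => (a i).map f

/-- The set of individuals occurring as parameters of a joint ground action. -/
def actElems {n : ℕ} {sig : Fin (n+1) → AgentSig} {U : Type} (a : JAct sig U) : Set U :=
  { u | ∃ (i : Fin (n+1)) (j : Fin ((sig i).np (a i).1)), (a i).2 j = u }

/-- Active domain of a family of instances (e.g. a global state). -/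
def adomF {D : Schema} {X U : Type} (s : X → Inst D U) : Set U := ⋃ i, (s i).adom

/-- The global instance `D_s` associated with a global state. -/
def gInst {D : Schema} {n : ℕ} {U : Type} (s : GState D n U) : Inst D U where
  rel := fun r => ⋃ i, (s i).rel r
  finite := fun r => Set.finite_iUnion fun i => (s i).finite r

/-- Componentwise disjunctive join of two global states. -/
def oplusG {D : Schema} {n : ℕ} {U : Type} (s t : GState D n U) : GState D.double n U :=
  fun i => (s i).oplus (t i)

/-- An artifact-centric multi-agent system. -/
structure ACMAS (D : Schema) {n : ℕ} (sig : Fin (n+1) → AgentSig) {U : Type}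
    (Ag : ∀ i, Agent D (sig i) U) : Type where
  /-- set of (reachable) global states -/
  S : Set (GState D n U)
  /-- initial global state -/
  s0 : GState D n U
  s0_mem : s0 ∈ S
  states_local : ∀ s ∈ S, ∀ i, s i ∈ (Ag i).L
  /-- global transition function -/
  τ : GState D n U → JAct sig U → Set (GState D n U)
  /-- `τ` is defined only on protocol-enabled joint actions -/
  tau_enabled : ∀ s a, (τ s a).Nonempty → ∀ i, a i ∈ (Ag i).Pr (s i)
  tau_closed : ∀ s ∈ S, ∀ a, τ s a ⊆ S

namespace ACMAS

variable {D : Schema} {n : ℕ} {sig : Fin (n+1) → AgentSig} {U : Type}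
  {Ag : ∀ i, Agent D (sig i) U}

/-- The transition relation `s → t`. -/
def Tr (M : ACMAS D sig Ag) (s t : GState D n U) : Prop := ∃ a, t ∈ M.τ s a

/-- Epistemic indistinguishability for agent `i`. -/
def Epi (M : ACMAS D sig Ag) (i : Fin (n+1)) (s t : GState D n U) : Prop :=
  s ∈ M.S ∧ t ∈ M.S ∧ s i = t i

/-- Union of the epistemic relations of agents `1, …, n`. -/
def EpiAny (M : ACMAS D sig Ag) (s t : GState D n U) : Prop :=
  ∃ i : Fin n, M.Epi i.succ s t

/-- The standard assumptions: the transition relation is serial and `S` is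
exactly the set of states reachable from `s0`. -/
def Std (M : ACMAS D sig Ag) : Prop :=
  (∀ s ∈ M.S, ∃ t, M.Tr s t) ∧ M.S = { s | Relation.ReflTransGen M.Tr M.s0 s }

/-- An (infinite) run. -/
def IsRun (M : ACMAS D sig Ag) (r : ℕ → GState D n U) : Prop :=
  (∀ k, r k ∈ M.S) ∧ ∀ k, M.Tr (r k) (r (k+1))

/-- A temporal-epistemic run. -/
def IsTERun (M : ACMAS D sig Ag) (r : ℕ → GState D n U) : Prop :=
  (∀ k, r k ∈ M.S) ∧ ∀ k, M.Tr (r k) (r (k+1)) ∨ M.EpiAny (r k) (r (k+1))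

end ACMAS

/-! ### Isomorphisms and equivalent assignments -/

/-- `ι` is a witness for the isomorphism of the families `s` and `s'`:
a constant-preserving bijection between the active domains extended with the
constants, preserving all relations componentwise. -/
def IsWitness {D : Schema} {X C U U' : Type} (cst : C → U) (cst' : C → U')
    (ι : U → U') (s : X → Inst D U) (s' : X → Inst D U') : Prop :=
  Set.BijOn ι (adomF s ∪ Set.range cst) (adomF s' ∪ Set.range cst') ∧
  (∀ c, ι (cst c) = cst' c) ∧
  ∀ (i : X) (r : D.Rel) (t : Fin (D.arity r) → U),
    (∀ j, t j ∈ adomF s ∪ Set.range cst) →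
    (t ∈ (s i).rel r ↔ (fun j => ι (t j)) ∈ (s' i).rel r)

/-- Isomorphism of families of instances (in particular global states). -/
def Iso {D : Schema} {X C U U' : Type} (cst : C → U) (cst' : C → U')
    (s : X → Inst D U) (s' : X → Inst D U') : Prop :=
  ∃ ι, IsWitness cst cst' ι s s'

/-- Equivalent assignments for a set `V` of variables w.r.t. `s` and `s'`. -/
def EqAssign {D : Schema} {n : ℕ} {C U U' : Type} (cst : C → U) (cst' : C → U')
    (V : Set ℕ) (σ : ℕ → U) (σ' : ℕ → U')
    (s : GState D n U) (s' : GState D n U') : Prop :=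
  ∃ γ : U → U',
    Set.BijOn γ (adomF s ∪ Set.range cst ∪ σ '' V)
      (adomF s' ∪ Set.range cst' ∪ σ' '' V) ∧
    IsWitness cst cst' γ s s' ∧
    ∀ x ∈ V, σ' x = γ (σ x)

/-! ### Simulations and bisimulations -/

section Bisim

variable {D : Schema} {n : ℕ} {sig sig' : Fin (n+1) → AgentSig} {C U U' : Type}
  {Ag : ∀ i, Agent D (sig i) U} {Ag' : ∀ i, Agent D (sig' i) U'}

/-- Simulation between two AC-MAS. -/
def IsSim (cst : C → U) (cst' : C → U')
    (M : ACMAS D sig Ag) (M' : ACMAS D sig' Ag')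
    (R : GState D n U → GState D n U' → Prop) : Prop :=
  ∀ s s', R s s' →
    s ∈ M.S ∧ s' ∈ M'.S ∧ Iso cst cst' s s' ∧
    ∀ t, M.Tr s t → ∃ t', M'.Tr s' t' ∧ R t t'

/-- Bisimulation. -/
def IsBisim (cst : C → U) (cst' : C → U')
    (M : ACMAS D sig Ag) (M' : ACMAS D sig' Ag')
    (R : GState D n U → GState D n U' → Prop) : Prop :=
  IsSim cst cst' M M' R ∧ IsSim cst' cst M' M (fun s' s => R s s')

/-- Bisimilarity of states. -/
def Bisimilar (cst : C → U) (cst' : C → U')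
    (M : ACMAS D sig Ag) (M' : ACMAS D sig' Ag')
    (s : GState D n U) (s' : GState D n U') : Prop :=
  ∃ R, IsBisim cst cst' M M' R ∧ R s s'

/-- `P ≈ P'`: the two systems are bisimilar. -/
def BisimSys (cst : C → U) (cst' : C → U')
    (M : ACMAS D sig Ag) (M' : ACMAS D sig' Ag') : Prop :=
  Bisimilar cst cst' M M' M.s0 M'.s0

/-- ⊕-simulation. -/
def IsOSim (cst : C → U) (cst' : C → U')
    (M : ACMAS D sig Ag) (M' : ACMAS D sig' Ag')
    (R : GState D n U → GState D n U' → Prop) : Prop :=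
  ∀ s s', R s s' →
    s ∈ M.S ∧ s' ∈ M'.S ∧ Iso cst cst' s s' ∧
    (∀ t, M.Tr s t → ∃ t', M'.Tr s' t' ∧
        Iso cst cst' (oplusG s t) (oplusG s' t') ∧ R t t') ∧
    (∀ (t : GState D n U) (i : Fin n), M.Epi i.succ s t →
        ∃ t', M'.Epi i.succ s' t' ∧
          Iso cst cst' (oplusG s t) (oplusG s' t') ∧ R t t')

/-- ⊕-bisimulation. -/
def IsOBisim (cst : C → U) (cst' : C → U')
    (M : ACMAS D sig Ag) (M' : ACMAS D sig' Ag')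
    (R : GState D n U → GState D n U' → Prop) : Prop :=
  IsOSim cst cst' M M' R ∧ IsOSim cst' cst M' M (fun s' s => R s s')

/-- ⊕-bisimilarity of states. -/
def OBisimilar (cst : C → U) (cst' : C → U')
    (M : ACMAS D sig Ag) (M' : ACMAS D sig' Ag')
    (s : GState D n U) (s' : GState D n U') : Prop :=
  ∃ R, IsOBisim cst cst' M M' R ∧ R s s'

/-- The two systems are ⊕-bisimilar. -/
def OBisimSys (cst : C → U) (cst' : C → U')
    (M : ACMAS D sig Ag) (M' : ACMAS D sig' Ag') : Prop :=
  OBisimilar cst cst' M M' M.s0 M'.s0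

end Bisim

/-! ### Uniformity and boundedness -/

section Uniform

variable {D : Schema} {n : ℕ} {sig : Fin (n+1) → AgentSig} {C U : Type}
  {Ag : ∀ i, Agent D (sig i) U}

/-- Temporal condition (1) of uniformity. -/
def UniformT (cst : C → U) (M : ACMAS D sig Ag) : Prop :=
  ∀ s ∈ M.S, ∀ t ∈ M.S, ∀ s' ∈ M.S, ∀ (t' : GState D n U) (a : JAct sig U),
    t ∈ M.τ s a →
    ∀ ι : U → U, IsWitness cst cst ι (oplusG s t) (oplusG s' t') →
    ∀ ι' : U → U,
      (∀ u ∈ adomF (oplusG s t) ∪ Set.range cst, ι' u = ι u) →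
      Set.InjOn ι' (adomF (oplusG s t) ∪ Set.range cst ∪ actElems a) →
      (∀ c, ι' (cst c) = cst c) →
      t' ∈ M.τ s' (JAct.map ι' a)

/-- Epistemic condition (2) of uniformity. -/
def UniformE (cst : C → U) (M : ACMAS D sig Ag) : Prop :=
  ∀ s ∈ M.S, ∀ t ∈ M.S, ∀ s' ∈ M.S, ∀ (t' : GState D n U) (i : Fin n),
    M.Epi i.succ s t → Iso cst cst (oplusG s t) (oplusG s' t') →
    M.Epi i.succ s' t'

/-- Uniform AC-MAS. -/
def Uniform (cst : C → U) (M : ACMAS D sig Ag) : Prop :=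
  UniformT cst M ∧ UniformE cst M

/-- `b`-bounded AC-MAS: no reachable state has more than `b` distinct elements
in its active domain. -/
def BBounded (M : ACMAS D sig Ag) (b : ℕ) : Prop :=
  ∀ s ∈ M.S, (adomF s).Finite ∧ (adomF s).ncard ≤ b

end Uniform

/-- `N_Ag`: the sum over the agents of the maximal number of parameters of
their action types. -/
def NAg {n : ℕ} (sig : Fin (n+1) → AgentSig) : ℕ :=
  ∑ i, Finset.univ.sup (sig i).np

/-! ### Abstractions -/

section Abstraction

variable {D : Schema} {n : ℕ} {sig : Fin (n+1) → AgentSig} {C U U' : Type}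
  {Ag : ∀ i, Agent D (sig i) U} {Ag' : ∀ i, Agent D (sig i) U'}

/-- `A'` is the abstract agent corresponding to `A`, over the domain `U'`. -/
def IsAbstractAgent {g : AgentSig} (cst : C → U) (cst' : C → U')
    (A : Agent D g U) (A' : Agent D g U') : Prop :=
  ∀ (l' : Inst D U') (α' : GAct g U'), α' ∈ A'.Pr l' ↔
    ∃ l ∈ A.L, ∃ α ∈ A.Pr l, ∃ ι : U → U',
      IsWitness cst cst' ι (fun _ : PUnit => l) (fun _ : PUnit => l') ∧
      ∃ ι' : U → U',
        (∀ u ∈ l.adom ∪ Set.range cst, ι' u = ι u) ∧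
        Set.InjOn ι' (l.adom ∪ Set.range cst ∪ Set.range α.2) ∧
        α' = α.map ι'

/-- `M'` is an abstraction of `M` (over the abstract agents `Ag'`). -/
def IsAbstraction (cst : C → U) (cst' : C → U')
    (M : ACMAS D sig Ag) (M' : ACMAS D sig Ag') : Prop :=
  (∀ i, IsAbstractAgent cst cst' (Ag i) (Ag' i)) ∧
  Iso cst' cst M'.s0 M.s0 ∧
  ∀ (s' t' : GState D n U') (a' : JAct sig U'),
    t' ∈ M'.τ s' a' ↔
      ∃ s ∈ M.S, ∃ t ∈ M.S, ∃ a : JAct sig U, t ∈ M.τ s a ∧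
        ∃ ι : U → U', IsWitness cst cst' ι s s' ∧ IsWitness cst cst' ι t t' ∧
          ∃ ι' : U → U',
            (∀ u ∈ adomF s ∪ adomF t ∪ Set.range cst, ι' u = ι u) ∧
            Set.InjOn ι' (adomF s ∪ adomF t ∪ Set.range cst ∪ actElems a) ∧
            a' = JAct.map ι' a

/-- `M'` is a ⊕-abstraction of `M` (over the abstract agents `Ag'`).
The requirement `s0' = s0` is rendered, across the two interpretation
domains, as: the initial states are isomorphic and `adom(s0) ⊆ C`. -/
def IsOAbstraction (cst : C → U) (cst' : C → U')
    (M : ACMAS D sig Ag) (M' : ACMAS D sig Ag') : Prop :=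
  (∀ i, IsAbstractAgent cst cst' (Ag i) (Ag' i)) ∧
  (Iso cst cst' M.s0 M'.s0 ∧ adomF M.s0 ⊆ Set.range cst) ∧
  ∀ (s' t' : GState D n U') (a' : JAct sig U'),
    t' ∈ M'.τ s' a' ↔
      ∃ s ∈ M.S, ∃ t ∈ M.S, ∃ a : JAct sig U, t ∈ M.τ s a ∧
        ∃ ι : U → U',
          IsWitness cst cst' ι (oplusG s t) (oplusG s' t') ∧
          ∃ ι' : U → U',
            (∀ u ∈ adomF (oplusG s t) ∪ Set.range cst, ι' u = ι u) ∧
            Set.InjOn ι' (adomF (oplusG s t) ∪ Set.range cst ∪ actElems a) ∧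
            a' = JAct.map ι' a

end Abstraction

/-! ### Temporal-epistemic specification languages -/

/-- Sentence-atomic FO-CTL formulas. -/
inductive SAFOCTL (D : Schema) (C : Type) : Type where
  | atom : (ψ : FO D C) → ψ.free = ∅ → SAFOCTL D C
  | not : SAFOCTL D C → SAFOCTL D C
  | imp : SAFOCTL D C → SAFOCTL D C → SAFOCTL D C
  | ax : SAFOCTL D C → SAFOCTL D C
  | au : SAFOCTL D C → SAFOCTL D C → SAFOCTL D C
  | eu : SAFOCTL D C → SAFOCTL D C → SAFOCTL D C

/-- Satisfaction of SA-FO-CTL formulas at a global state. -/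
def SAFOCTL.sat {D : Schema} {C : Type} {n : ℕ} {sig : Fin (n+1) → AgentSig}
    {U : Type} {Ag : ∀ i, Agent D (sig i) U}
    (cst : C → U) (M : ACMAS D sig Ag) :
    SAFOCTL D C → GState D n U → Prop
  | .atom ψ _, s => ∀ σ, FO.sat cst (gInst s) σ ψ
  | .not φ, s => ¬ SAFOCTL.sat cst M φ s
  | .imp φ ψ, s => SAFOCTL.sat cst M φ s → SAFOCTL.sat cst M ψ s
  | .ax φ, s => ∀ r, M.IsRun r → r 0 = s → SAFOCTL.sat cst M φ (r 1)
  | .au φ ψ, s => ∀ r, M.IsRun r → r 0 = s →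
      ∃ k, SAFOCTL.sat cst M ψ (r k) ∧ ∀ j < k, SAFOCTL.sat cst M φ (r j)
  | .eu φ ψ, s => ∃ r, M.IsRun r ∧ r 0 = s ∧
      ∃ k, SAFOCTL.sat cst M ψ (r k) ∧ ∀ j < k, SAFOCTL.sat cst M φ (r j)

/-- `P ⊨ φ` for SA-FO-CTL. -/
def SAFOCTL.satM {D : Schema} {C : Type} {n : ℕ} {sig : Fin (n+1) → AgentSig}
    {U : Type} {Ag : ∀ i, Agent D (sig i) U}
    (cst : C → U) (M : ACMAS D sig Ag) (φ : SAFOCTL D C) : Prop :=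
  SAFOCTL.sat cst M φ M.s0

/-- FO-CTLK formulas, with epistemic operators for agents `1, …, n` and
common knowledge. -/
inductive FOCTLK (D : Schema) (C : Type) (n : ℕ) : Type where
  | atom : FO D C → FOCTLK D C n
  | not : FOCTLK D C n → FOCTLK D C n
  | imp : FOCTLK D C n → FOCTLK D C n → FOCTLK D C n
  | all : ℕ → FOCTLK D C n → FOCTLK D C n
  | ax : FOCTLK D C n → FOCTLK D C n
  | au : FOCTLK D C n → FOCTLK D C n → FOCTLK D C n
  | eu : FOCTLK D C n → FOCTLK D C n → FOCTLK D C n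
  | know : Fin n → FOCTLK D C n → FOCTLK D C n
  | ck : FOCTLK D C n → FOCTLK D C n

namespace FOCTLK

variable {D : Schema} {C : Type} {n : ℕ}

def free : FOCTLK D C n → Finset ℕ
  | .atom ψ => ψ.free
  | .not φ => φ.free
  | .imp φ ψ => φ.free ∪ ψ.free
  | .all x φ => φ.free.erase x
  | .ax φ => φ.free
  | .au φ ψ => φ.free ∪ ψ.free
  | .eu φ ψ => φ.free ∪ ψ.free
  | .know _ φ => φ.free
  | .ck φ => φ.free

def vars : FOCTLK D C n → Finset ℕ
  | .atom ψ => ψ.vars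
  | .not φ => φ.vars
  | .imp φ ψ => φ.vars ∪ ψ.vars
  | .all x φ => insert x φ.vars
  | .ax φ => φ.vars
  | .au φ ψ => φ.vars ∪ ψ.vars
  | .eu φ ψ => φ.vars ∪ ψ.vars
  | .know _ φ => φ.vars
  | .ck φ => φ.vars

/-- Satisfaction `(P, s, σ) ⊨ φ` of FO-CTLK formulas. -/
def sat {sig : Fin (n+1) → AgentSig} {U : Type} {Ag : ∀ i, Agent D (sig i) U}
    (cst : C → U) (M : ACMAS D sig Ag) :
    FOCTLK D C n → GState D n U → (ℕ → U) → Prop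
  | .atom ψ, s, σ => FO.sat cst (gInst s) σ ψ
  | .not φ, s, σ => ¬ sat cst M φ s σ
  | .imp φ ψ, s, σ => sat cst M φ s σ → sat cst M ψ s σ
  | .all x φ, s, σ => ∀ u ∈ adomF s, sat cst M φ s (Function.update σ x u)
  | .ax φ, s, σ => ∀ r, M.IsRun r → r 0 = s → sat cst M φ (r 1) σ
  | .au φ ψ, s, σ => ∀ r, M.IsRun r → r 0 = s →
      ∃ k, sat cst M ψ (r k) σ ∧ ∀ j < k, sat cst M φ (r j) σ
  | .eu φ ψ, s, σ => ∃ r, M.IsRun r ∧ r 0 = s ∧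
      ∃ k, sat cst M ψ (r k) σ ∧ ∀ j < k, sat cst M φ (r j) σ
  | .know i φ, s, σ => ∀ t, M.Epi i.succ s t → sat cst M φ t σ
  | .ck φ, s, σ => ∀ t, Relation.TransGen M.EpiAny s t → sat cst M φ t σ

/-- `P ⊨ φ` for FO-CTLK: satisfaction at the initial state under every
assignment. -/
def satM {sig : Fin (n+1) → AgentSig} {U : Type} {Ag : ∀ i, Agent D (sig i) U}
    (cst : C → U) (M : ACMAS D sig Ag) (φ : FOCTLK D C n) : Prop :=
  ∀ σ : ℕ → U, sat cst M φ M.s0 σ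

end FOCTLK

/-- FO-ECTLK: the existential fragment. -/
inductive FOECTLK (D : Schema) (C : Type) (n : ℕ) : Type where
  | atom : FO D C → FOECTLK D C n
  | and : FOECTLK D C n → FOECTLK D C n → FOECTLK D C n
  | or : FOECTLK D C n → FOECTLK D C n → FOECTLK D C n
  | all : ℕ → FOECTLK D C n → FOECTLK D C n
  | ex : ℕ → FOECTLK D C n → FOECTLK D C n
  | enext : FOECTLK D C n → FOECTLK D C n
  | eu : FOECTLK D C n → FOECTLK D C n → FOECTLK D C n
  | dknow : Fin n → FOECTLK D C n → FOECTLK D C n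
  | dck : FOECTLK D C n → FOECTLK D C n

/-- Satisfaction of FO-ECTLK formulas. -/
def FOECTLK.sat {D : Schema} {C : Type} {n : ℕ} {sig : Fin (n+1) → AgentSig}
    {U : Type} {Ag : ∀ i, Agent D (sig i) U}
    (cst : C → U) (M : ACMAS D sig Ag) :
    FOECTLK D C n → GState D n U → (ℕ → U) → Prop
  | .atom ψ, s, σ => FO.sat cst (gInst s) σ ψ
  | .and φ ψ, s, σ => FOECTLK.sat cst M φ s σ ∧ FOECTLK.sat cst M ψ s σ
  | .or φ ψ, s, σ => FOECTLK.sat cst M φ s σ ∨ FOECTLK.sat cst M ψ s σ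
  | .all x φ, s, σ => ∀ u ∈ adomF s, FOECTLK.sat cst M φ s (Function.update σ x u)
  | .ex x φ, s, σ => ∃ u ∈ adomF s, FOECTLK.sat cst M φ s (Function.update σ x u)
  | .enext φ, s, σ => ∃ r, M.IsRun r ∧ r 0 = s ∧ FOECTLK.sat cst M φ (r 1) σ
  | .eu φ ψ, s, σ => ∃ r, M.IsRun r ∧ r 0 = s ∧
      ∃ k, FOECTLK.sat cst M ψ (r k) σ ∧ ∀ j < k, FOECTLK.sat cst M φ (r j) σ
  | .dknow i φ, s, σ => ∃ t, M.Epi i.succ s t ∧ FOECTLK.sat cst M φ t σ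
  | .dck φ, s, σ => ∃ t, Relation.TransGen M.EpiAny s t ∧ FOECTLK.sat cst M φ t σ

/-- `P ⊨ φ` for FO-ECTLK. -/
def FOECTLK.satM {D : Schema} {C : Type} {n : ℕ} {sig : Fin (n+1) → AgentSig}
    {U : Type} {Ag : ∀ i, Agent D (sig i) U}
    (cst : C → U) (M : ACMAS D sig Ag) (φ : FOECTLK D C n) : Prop :=
  ∀ σ : ℕ → U, FOECTLK.sat cst M φ M.s0 σ

/-- `Mb` is the `b`-restriction of `M`. -/
def IsBRestriction {D : Schema} {n : ℕ} {sig : Fin (n+1) → AgentSig} {U : Type}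
    {Ag : ∀ i, Agent D (sig i) U} (Mb M : ACMAS D sig Ag) (b : ℕ) : Prop :=
  Mb.s0 = M.s0 ∧
  Mb.S = { s ∈ M.S | (adomF s).Finite ∧ (adomF s).ncard ≤ b } ∧
  ∀ s a, Mb.τ s a = { t ∈ M.τ s a | s ∈ Mb.S ∧ t ∈ Mb.S }

/-! ### Artifact-centric programs -/

/-- A declarative artifact-centric program. -/
structure ACProgram (D : Schema) (C : Type) {n : ℕ} (sig : Fin (n+1) → AgentSig) where
  /-- local database schemas, as sets of relation symbols -/
  locRel : Fin (n+1) → Set D.Rel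
  locDisj : ∀ i j, i ≠ j → Disjoint (locRel i) (locRel j)
  /-- initial local states; their values are constants -/
  l0 : ∀ _ : Fin (n+1), Inst D C
  l0_loc : ∀ i r, r ∉ locRel i → (l0 i).rel r = ∅
  /-- preconditions: FO-formulas over the local schema whose free variables
  are among the action parameters -/
  pre : ∀ i, (sig i).Act → FO D C
  /-- postconditions: FO-formulas over the global schema and its primed copy -/
  post : ∀ i, (sig i).Act → FO D.double C
  pre_free : ∀ i a, ↑(pre i a).free ⊆ { x : ℕ | x < (sig i).np a }
  post_free : ∀ i a, ↑(post i a).free ⊆ { x : ℕ | x < (sig i).np a }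
  pre_loc : ∀ i a, (pre i a).UsesOnly (locRel i)

namespace ACProgram

variable {D : Schema} {C : Type} {n : ℕ} {sig : Fin (n+1) → AgentSig}

/-- The constants mentioned in the program. -/
def progConsts (P : ACProgram D C sig) : Set C :=
  (⋃ i, (P.l0 i).adom) ∪
  ⋃ i, ⋃ a : (sig i).Act, ((P.pre i a).consts ∪ (P.post i a).consts)

/-- Ground values of the postcondition parameters of a joint ground action. -/
def postElems (P : ACProgram D C sig) {U : Type} (a : JAct sig U) : Set U :=
  { u | ∃ (i : Fin (n+1)) (j : Fin ((sig i).np (a i).1)),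
      (j : ℕ) ∈ (P.post i (a i).1).free ∧ (a i).2 j = u }

/-- The agent induced by the program for index `i`. -/
def InducedAgent {U : Type} (cst : C → U) (P : ACProgram D C sig) (i : Fin (n+1))
    (A : Agent D (sig i) U) : Prop :=
  A.L = { l : Inst D U | ∀ r, r ∉ P.locRel i → l.rel r = ∅ } ∧
  ∀ (l : Inst D U) (α : GAct (sig i) U), α ∈ A.Pr l ↔
    ∀ σ : ℕ → U, (∀ j : Fin ((sig i).np α.1), σ (j : ℕ) = α.2 j) →
      FO.sat cst l σ (P.pre i α.1)

/-- The transitions induced by the program. -/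
def InducedTrans {U : Type} (cst : C → U) (P : ACProgram D C sig)
    (s t : GState D n U) (a : JAct sig U) : Prop :=
  (∀ i, ∀ σ : ℕ → U, (∀ j : Fin ((sig i).np (a i).1), σ (j : ℕ) = (a i).2 j) →
      FO.sat cst (s i) σ (P.pre i (a i).1)) ∧
  adomF t ⊆ adomF s ∪ P.postElems a ∪ cst '' (⋃ i, (P.post i (a i).1).consts) ∧
  (∀ i, ∀ σ : ℕ → U, (∀ j : Fin ((sig i).np (a i).1), σ (j : ℕ) = (a i).2 j) →
      FO.sat cst ((gInst s).oplus (gInst t)) σ (P.post i (a i).1))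

/-- `M` is the AC-MAS induced by the program `P` (the transition relation is
assumed to be serial). -/
def InducedACMAS {U : Type} (cst : C → U) (P : ACProgram D C sig)
    (Ag : ∀ i, Agent D (sig i) U) (M : ACMAS D sig Ag) : Prop :=
  (∀ i, P.InducedAgent cst i (Ag i)) ∧
  M.s0 = (fun i => (P.l0 i).map cst) ∧
  (∀ s t a, t ∈ M.τ s a ↔ P.InducedTrans cst s t a) ∧
  M.Std

end ACProgram


/-! ### Auxiliary lemmas for Statement 9 -/

section Aux

open Set

variable {D : Schema} {C U U' U'' : Type}

lemma Inst.adom_eq (I : Inst D U) :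
    I.adom = ⋃ r : D.Rel, ⋃ t ∈ I.rel r, Set.range t := by
  ext u
  simp only [Inst.adom, Set.mem_setOf_eq, Set.mem_iUnion, Set.mem_range]
  tauto

lemma Inst.adom_finite (I : Inst D U) : I.adom.Finite := by
  rw [Inst.adom_eq]
  exact Set.finite_iUnion fun r => (I.finite r).biUnion fun t _ => Set.finite_range t

lemma adomF_finite {X : Type} [Finite X] (s : X → Inst D U) : (adomF s).Finite :=
  Set.finite_iUnion fun i => (s i).adom_finite

lemma Inst.adom_map (f : U → U') (I : Inst D U) : (I.map f).adom = f '' I.adom := by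
  ext v
  constructor
  · rintro ⟨r, t, ⟨t₀, ht₀, rfl⟩, j, rfl⟩
    exact ⟨t₀ j, ⟨r, t₀, ht₀, j, rfl⟩, rfl⟩
  · rintro ⟨u, ⟨r, t₀, ht₀, j, rfl⟩, rfl⟩
    exact ⟨r, f ∘ t₀, ⟨t₀, ht₀, rfl⟩, j, rfl⟩

lemma Inst.adom_oplus (I J : Inst D U) : (I.oplus J).adom = I.adom ∪ J.adom := by
  ext u
  constructor
  · rintro ⟨r, t, ht, j, rfl⟩
    cases r with
    | inl r₀ => exact Or.inl ⟨r₀, t, ht, j, rfl⟩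
    | inr r₀ => exact Or.inr ⟨r₀, t, ht, j, rfl⟩
  · rintro (⟨r₀, t, ht, j, rfl⟩ | ⟨r₀, t, ht, j, rfl⟩)
    · exact ⟨Sum.inl r₀, t, ht, j, rfl⟩
    · exact ⟨Sum.inr r₀, t, ht, j, rfl⟩

lemma adomF_oplusG {n : ℕ} (s t : GState D n U) :
    adomF (oplusG s t) = adomF s ∪ adomF t := by
  simp only [adomF, oplusG, Inst.adom_oplus]
  rw [Set.iUnion_union_distrib]

lemma actElems_finite {n : ℕ} {sig : Fin (n+1) → AgentSig} (a : JAct sig U) :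
    (actElems a).Finite := by
  have : actElems a = ⋃ i, Set.range (a i).2 := by
    ext u
    simp only [actElems, Set.mem_setOf_eq, Set.mem_iUnion, Set.mem_range]
  rw [this]
  exact Set.finite_iUnion fun i => Set.finite_range _

/-- Extension of a finite partial injection. -/
lemma extend_injOn (f : U → U') (A B : Set U) (hA : A.Finite) (hB : B.Finite)
    (hf : Set.InjOn f A)
    (hcard : Cardinal.mk ↥(A ∪ B) ≤ Cardinal.mk U') :
    ∃ g : U → U', (∀ u ∈ A, g u = f u) ∧ Set.InjOn g (A ∪ B) := by
  classical
  have hdisj : Disjoint A (B \ A) := Set.disjoint_sdiff_right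
  have hAB : Cardinal.mk ↥A + Cardinal.mk ↥(B \ A) ≤
      Cardinal.mk ↥(f '' A) + Cardinal.mk ↥((f '' A)ᶜ) := by
    rw [Cardinal.mk_sum_compl, ← Cardinal.mk_union_of_disjoint hdisj,
      Set.union_diff_self]
    exact hcard
  rw [Cardinal.mk_image_eq_of_injOn f A hf,
    add_comm (Cardinal.mk ↥A) (Cardinal.mk ↥(B \ A)),
    add_comm (Cardinal.mk ↥A) (Cardinal.mk ↥((f '' A)ᶜ)),
    Cardinal.add_le_add_iff_of_lt_aleph0 hA.lt_aleph0] at hAB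
  obtain ⟨e⟩ := Cardinal.le_def _ _ |>.mp hAB
  refine ⟨fun u => if h : u ∈ B \ A then (e ⟨u, h⟩ : U') else f u, ?_, ?_⟩
  · intro u hu
    exact dif_neg (fun h : u ∈ B \ A => h.2 hu)
  · intro u hu v hv huv
    have hmemA : ∀ w ∈ A ∪ B, w ∉ B \ A → w ∈ A := by
      rintro w (hw | hw) hnw
      · exact hw
      · exact (em (w ∈ A)).elim id fun hn => absurd ⟨hw, hn⟩ hnw
    have hcompl : ∀ (x : ↥(B \ A)) (w : U), w ∈ A → (e x : U') ≠ f w := by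
      intro x w hw hcon
      exact (e x).2 ⟨w, hw, hcon.symm⟩
    by_cases h1 : u ∈ B \ A <;> by_cases h2 : v ∈ B \ A <;>
      simp only [dif_pos, dif_neg, h1, h2, dite_true, dite_false] at huv
    · exact congrArg Subtype.val (e.injective (Subtype.ext huv))
    · exact absurd huv (hcompl _ _ (hmemA v hv h2))
    · exact absurd huv.symm (hcompl _ _ (hmemA u hu h1))
    · exact hf (hmemA u hu h1) (hmemA v hv h2) huv

end Aux


section Witness

open Set

variable {D : Schema} {C U U' U'' W V : Type} {X : Type}

lemma mem_adomF_of_rel {s : X → Inst D U} {i : X} {r : D.Rel}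
    {t : Fin (D.arity r) → U} (ht : t ∈ (s i).rel r) (j : Fin (D.arity r)) :
    t j ∈ adomF s :=
  Set.mem_iUnion.mpr ⟨i, r, t, ht, j, rfl⟩

lemma adomF_map {n : ℕ} (f : U → U') (s : GState D n U) :
    adomF (fun i => (s i).map f) = f '' adomF s := by
  simp only [adomF, Inst.adom_map, Set.image_iUnion]

namespace IsWitness

variable {cst : C → U} {cst' : C → U'} {cst'' : C → U''}

lemma relImage {ι : U → U'} {s : X → Inst D U} {s' : X → Inst D U'}
    (h : IsWitness cst cst' ι s s') {i : X} {r : D.Rel}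
    {t : Fin (D.arity r) → U} (ht : t ∈ (s i).rel r) :
    (fun j => ι (t j)) ∈ (s' i).rel r :=
  (h.2.2 i r t (fun j => Or.inl (mem_adomF_of_rel ht j))).mp ht

lemma relPreimage {ι : U → U'} {s : X → Inst D U} {s' : X → Inst D U'}
    (h : IsWitness cst cst' ι s s') {i : X} {r : D.Rel}
    {t' : Fin (D.arity r) → U'} (ht' : t' ∈ (s' i).rel r) :
    ∃ t, t ∈ (s i).rel r ∧ (∀ j, t j ∈ adomF s ∪ Set.range cst) ∧
      (fun j => ι (t j)) = t' := by
  have hc : ∀ j, ∃ u, u ∈ adomF s ∪ Set.range cst ∧ ι u = t' j := by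
    intro j
    obtain ⟨u, hu, hιu⟩ := h.1.2.2 (Or.inl (mem_adomF_of_rel ht' j))
    exact ⟨u, hu, hιu⟩
  choose u hu hιu using hc
  have heq : (fun j => ι (u j)) = t' := funext hιu
  have hmem : u ∈ (s i).rel r := (h.2.2 i r u hu).mpr (heq ▸ ht')
  exact ⟨u, hmem, hu, heq⟩

lemma image_adomF {ι : U → U'} {s : X → Inst D U} {s' : X → Inst D U'}
    (h : IsWitness cst cst' ι s s') : ι '' adomF s = adomF s' := by
  apply Set.Subset.antisymm
  · rintro v ⟨u, hu, rfl⟩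
    obtain ⟨i, r, t, ht, j, rfl⟩ := Set.mem_iUnion.mp hu
    exact Set.mem_iUnion.mpr ⟨i, r, fun j => ι (t j), h.relImage ht, j, rfl⟩
  · intro v hv
    obtain ⟨i, r, t', ht', j, rfl⟩ := Set.mem_iUnion.mp hv
    obtain ⟨t, ht, _, heq⟩ := h.relPreimage ht'
    exact ⟨t j, mem_adomF_of_rel ht j, congrFun heq j⟩

lemma congr {f g : U → U'} {s : X → Inst D U} {s' : X → Inst D U'}
    (h : IsWitness cst cst' f s s')
    (hfg : ∀ u ∈ adomF s ∪ Set.range cst, g u = f u) :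
    IsWitness cst cst' g s s' := by
  refine ⟨h.1.congr fun u hu => (hfg u hu).symm, fun c => ?_, fun i r t hdom => ?_⟩
  · rw [hfg (cst c) (Or.inr ⟨c, rfl⟩), h.2.1 c]
  · have : (fun j => g (t j)) = fun j => f (t j) := funext fun j => hfg _ (hdom j)
    rw [this]
    exact h.2.2 i r t hdom

lemma comp {ι : U → U'} {κ : U' → U''} {s : X → Inst D U}
    {s' : X → Inst D U'} {s'' : X → Inst D U''}
    (h : IsWitness cst cst' ι s s') (h' : IsWitness cst' cst'' κ s' s'') :
    IsWitness cst cst'' (κ ∘ ι) s s'' := by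
  refine ⟨h'.1.comp h.1, fun c => by simp [Function.comp, h.2.1, h'.2.1],
    fun i r t hdom => ?_⟩
  exact (h.2.2 i r t hdom).trans (h'.2.2 i r _ (fun j => h.1.1 (hdom j)))

end IsWitness

lemma isWitness_id {cst : C → U} (s : X → Inst D U) : IsWitness cst cst id s s :=
  ⟨Set.bijOn_id _, fun _ => rfl, fun _ _ _ _ => Iff.rfl⟩

variable {cst : C → U} {cst' : C → U'}

lemma IsWitness.oplus_fst {n : ℕ} {s t : GState D n U} {s' t' : GState D n U'} {ι : U → U'}
    (h : IsWitness cst cst' ι (oplusG s t) (oplusG s' t')) :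
    IsWitness cst cst' ι s s' := by
  have hsub : adomF s ∪ Set.range cst ⊆ adomF (oplusG s t) ∪ Set.range cst := by
    rw [adomF_oplusG]
    exact Set.union_subset_union_left _ Set.subset_union_left
  have hrel : ∀ (i : Fin (n+1)) (r : D.Rel) (τ : Fin (D.arity r) → U),
      (∀ j, τ j ∈ adomF s ∪ Set.range cst) →
      (τ ∈ (s i).rel r ↔ (fun j => ι (τ j)) ∈ (s' i).rel r) :=
    fun i r τ hdom => h.2.2 i (Sum.inl r) τ (fun j => hsub (hdom j))
  refine ⟨⟨?_, h.1.2.1.mono hsub, ?_⟩, h.2.1, hrel⟩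
  · rintro u (hu | hu)
    · obtain ⟨i, r, τ, hτ, j, rfl⟩ := Set.mem_iUnion.mp hu
      have : (fun j => ι (τ j)) ∈ (s' i).rel r :=
        (hrel i r τ fun j => Or.inl (mem_adomF_of_rel hτ j)).mp hτ
      exact Or.inl (Set.mem_iUnion.mpr ⟨i, r, _, this, j, rfl⟩)
    · obtain ⟨c, rfl⟩ := hu
      exact Or.inr ⟨c, (h.2.1 c).symm⟩
  · rintro v (hv | hv)
    · obtain ⟨i, r, τ', hτ', j, rfl⟩ := Set.mem_iUnion.mp hv
      have hτ'2 : τ' ∈ ((oplusG s' t') i).rel (Sum.inl r) := hτ'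
      obtain ⟨τ, hτ, hdom, heq⟩ := h.relPreimage (i := i) (r := Sum.inl r) hτ'2
      have hτs : τ ∈ (s i).rel r := hτ
      exact ⟨τ j, Or.inl (mem_adomF_of_rel hτs j), congrFun heq j⟩
    · obtain ⟨c, rfl⟩ := hv
      exact ⟨cst c, Or.inr ⟨c, rfl⟩, h.2.1 c⟩

lemma IsWitness.oplus_snd {n : ℕ} {s t : GState D n U} {s' t' : GState D n U'} {ι : U → U'}
    (h : IsWitness cst cst' ι (oplusG s t) (oplusG s' t')) :
    IsWitness cst cst' ι t t' := by
  have hsub : adomF t ∪ Set.range cst ⊆ adomF (oplusG s t) ∪ Set.range cst := by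
    rw [adomF_oplusG]
    exact Set.union_subset_union_left _ Set.subset_union_right
  have hrel : ∀ (i : Fin (n+1)) (r : D.Rel) (τ : Fin (D.arity r) → U),
      (∀ j, τ j ∈ adomF t ∪ Set.range cst) →
      (τ ∈ (t i).rel r ↔ (fun j => ι (τ j)) ∈ (t' i).rel r) :=
    fun i r τ hdom => h.2.2 i (Sum.inr r) τ (fun j => hsub (hdom j))
  refine ⟨⟨?_, h.1.2.1.mono hsub, ?_⟩, h.2.1, hrel⟩
  · rintro u (hu | hu)
    · obtain ⟨i, r, τ, hτ, j, rfl⟩ := Set.mem_iUnion.mp hu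
      have : (fun j => ι (τ j)) ∈ (t' i).rel r :=
        (hrel i r τ fun j => Or.inl (mem_adomF_of_rel hτ j)).mp hτ
      exact Or.inl (Set.mem_iUnion.mpr ⟨i, r, _, this, j, rfl⟩)
    · obtain ⟨c, rfl⟩ := hu
      exact Or.inr ⟨c, (h.2.1 c).symm⟩
  · rintro v (hv | hv)
    · obtain ⟨i, r, τ', hτ', j, rfl⟩ := Set.mem_iUnion.mp hv
      have hτ'2 : τ' ∈ ((oplusG s' t') i).rel (Sum.inr r) := hτ'
      obtain ⟨τ, hτ, hdom, heq⟩ := h.relPreimage (i := i) (r := Sum.inr r) hτ'2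
      have hτs : τ ∈ (t i).rel r := hτ
      exact ⟨τ j, Or.inl (mem_adomF_of_rel hτs j), congrFun heq j⟩
    · obtain ⟨c, rfl⟩ := hv
      exact ⟨cst c, Or.inr ⟨c, rfl⟩, h.2.1 c⟩

/-- Two witnesses with the same source induce a witness between the targets. -/
lemma isWitness_source_comp {cstW : C → W} {Z : X → Inst D W} {Y₁ Y₂ : X → Inst D U'}
    {ι₁ ι₂ : W → U'}
    (h₁ : IsWitness cstW cst' ι₁ Z Y₁) (h₂ : IsWitness cstW cst' ι₂ Z Y₂) :
    ∃ μ : U' → U', IsWitness cst' cst' μ Y₁ Y₂ ∧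
      ∀ u ∈ adomF Z ∪ Set.range cstW, μ (ι₁ u) = ι₂ u := by
  classical
  set Dm := adomF Z ∪ Set.range cstW with hDm
  set μ : U' → U' :=
    fun v => if h : ∃ u, u ∈ Dm ∧ ι₁ u = v then ι₂ h.choose else v with hμ
  have hval : ∀ u ∈ Dm, μ (ι₁ u) = ι₂ u := by
    intro u hu
    have hex : ∃ u₀, u₀ ∈ Dm ∧ ι₁ u₀ = ι₁ u := ⟨u, hu, rfl⟩
    simp only [hμ, dif_pos hex]
    have hspec := hex.choose_spec
    rw [h₁.1.2.1 hspec.1 hu hspec.2]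
  have himg : ι₁ '' Dm = adomF Y₁ ∪ Set.range cst' := h₁.1.image_eq
  have himg₂ : ι₂ '' Dm = adomF Y₂ ∪ Set.range cst' := h₂.1.image_eq
  refine ⟨μ, ⟨⟨?_, ?_, ?_⟩, ?_, ?_⟩, hval⟩
  · -- MapsTo
    intro v hv
    obtain ⟨u, hu, rfl⟩ := himg ▸ hv
    rw [hval u hu]
    exact himg₂ ▸ Set.mem_image_of_mem ι₂ hu
  · -- InjOn
    intro v hv w hw hvw
    obtain ⟨u, hu, rfl⟩ := himg ▸ hv
    obtain ⟨u', hu', rfl⟩ := himg ▸ hw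
    rw [hval u hu, hval u' hu'] at hvw
    rw [h₂.1.2.1 hu hu' hvw]
  · -- SurjOn
    intro z hz
    obtain ⟨u, hu, rfl⟩ := himg₂ ▸ hz
    exact ⟨ι₁ u, himg ▸ Set.mem_image_of_mem ι₁ hu, hval u hu⟩
  · -- constants
    intro c
    have h := hval (cstW c) (Or.inr ⟨c, rfl⟩)
    rw [h₁.2.1 c] at h
    rw [h, h₂.2.1 c]
  · -- relations
    intro i r τ hdom
    have hc : ∀ j, ∃ u, u ∈ Dm ∧ ι₁ u = τ j := by
      intro j
      obtain ⟨u, hu, hιu⟩ := himg ▸ (hdom j)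
      exact ⟨u, hu, hιu⟩
    choose u hu hιu using hc
    have hτeq : τ = fun j => ι₁ (u j) := funext fun j => (hιu j).symm
    have h1 : τ ∈ (Y₁ i).rel r ↔ u ∈ (Z i).rel r := by
      rw [hτeq]
      exact (h₁.2.2 i r u hu).symm
    have h2 : (fun j => μ (τ j)) = fun j => ι₂ (u j) := by
      funext j
      rw [← hιu j, hval (u j) (hu j)]
    rw [h1, h2]
    exact h₂.2.2 i r u hu

/-- Extending a witness along fresh elements of a second state yields a
witness for the ⊕-states. -/
lemma isWitness_oplus_map {n : ℕ} {V : Type} {cstV : C → V} {x y w : GState D n V}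
    {κ kh : V → V} (hW : IsWitness cstV cstV κ x y)
    (hagree : ∀ v ∈ adomF x ∪ Set.range cstV, kh v = κ v)
    (hinj : Set.InjOn kh (adomF x ∪ Set.range cstV ∪ adomF w)) :
    IsWitness cstV cstV kh (oplusG x w) (oplusG y (fun i => (w i).map kh)) := by
  set A := adomF x ∪ Set.range cstV with hA
  have himgA : kh '' A = adomF y ∪ Set.range cstV := by
    rw [Set.image_congr hagree, hW.1.image_eq]
  have himgx : kh '' adomF x = adomF y := by
    rw [Set.image_congr (fun v hv => hagree v (Or.inl hv)), hW.image_adomF]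
  have hdomset : adomF (oplusG x w) ∪ Set.range cstV = A ∪ adomF w := by
    rw [adomF_oplusG, hA]
    ext v; simp only [Set.mem_union]; tauto
  have htgtset : adomF (oplusG y (fun i => (w i).map kh)) ∪ Set.range cstV
      = kh '' (A ∪ adomF w) := by
    rw [adomF_oplusG, adomF_map, Set.image_union, himgA]
    ext v; simp only [Set.mem_union]; tauto
  have hinj' : Set.InjOn kh (A ∪ adomF w) := hinj
  refine ⟨?_, fun c => ?_, fun i r τ hdom => ?_⟩
  · rw [hdomset, htgtset]
    exact hinj'.bijOn_image
  · rw [hagree _ (Or.inr ⟨c, rfl⟩), hW.2.1 c]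
  · simp only [hdomset] at hdom
    cases r with
    | inl r₀ =>
      show τ ∈ (x i).rel r₀ ↔ (fun j => kh (τ j)) ∈ (y i).rel r₀
      constructor
      · intro hτ
        have : (fun j => kh (τ j)) = fun j => κ (τ j) :=
          funext fun j => hagree _ (Or.inl (mem_adomF_of_rel hτ j))
        rw [this]
        exact hW.relImage hτ
      · intro hτ'
        have hcoord : ∀ j, τ j ∈ adomF x := by
          intro j
          have h1 : kh (τ j) ∈ adomF y := mem_adomF_of_rel hτ' j
          rw [← himgx] at h1
          obtain ⟨v, hv, hveq⟩ := h1
          have : τ j = v := hinj' (hdom j) (Or.inl (Or.inl hv)) hveq.symm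
          rw [this]; exact hv
        have heq : (fun j => kh (τ j)) = fun j => κ (τ j) :=
          funext fun j => hagree _ (Or.inl (hcoord j))
        rw [heq] at hτ'
        exact (hW.2.2 i r₀ τ (fun j => Or.inl (hcoord j))).mpr hτ'
    | inr r₀ =>
      show τ ∈ (w i).rel r₀ ↔ (fun j => kh (τ j)) ∈ ((w i).map kh).rel r₀
      constructor
      · intro hτ
        exact ⟨τ, hτ, rfl⟩
      · rintro ⟨τ₀, hτ₀, heq⟩
        have : τ₀ = τ := by
          funext j
          exact hinj' (Or.inr (mem_adomF_of_rel hτ₀ j)) (hdom j) (congrFun heq j)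
        rw [← this]; exact hτ₀


end Witness


/-! ### Transfer lemmas inside a uniform system -/

section Transfer

open Set

variable {D : Schema} {C : Type} [Fintype C] {n : ℕ}
  {sig' : Fin (n+1) → AgentSig} {U' : Type} {cst' : C → U'}
  {Ag' : ∀ i, Agent D (sig' i) U'}

/-- Transfer a temporal transition along a witness, inside a uniform system. -/
lemma transfer_tr (M' : ACMAS D sig' Ag') (hu' : Uniform cst' M')
    {v y v₂ : GState D n U'} {a : JAct sig' U'}
    (hv : v ∈ M'.S) (hv₂ : v₂ ∈ M'.S) (hy : y ∈ M'.S) (hτ : v₂ ∈ M'.τ v a)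
    {κ : U' → U'} (hκ : IsWitness cst' cst' κ v y) :
    ∃ (y₂ : GState D n U') (kh : U' → U'), M'.Tr y y₂ ∧ y₂ ∈ M'.S ∧
      IsWitness cst' cst' kh (oplusG v v₂) (oplusG y y₂) ∧
      (∀ u ∈ adomF v ∪ Set.range cst', kh u = κ u) := by
  set A : Set U' := adomF v ∪ Set.range cst' with hA
  set B : Set U' := adomF v₂ ∪ actElems a with hB
  have hAfin : A.Finite := (adomF_finite v).union (Set.finite_range cst')
  have hBfin : B.Finite := (adomF_finite v₂).union (actElems_finite a)
  obtain ⟨kh, hagree, hinj⟩ := extend_injOn κ A B hAfin hBfin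
    (hκ.1.2.1) (Cardinal.mk_set_le _)
  have hinj₁ : Set.InjOn kh (adomF v ∪ Set.range cst' ∪ adomF v₂) :=
    hinj.mono (by rw [hA, hB]; intro u hu; revert hu; simp only [Set.mem_union]; tauto)
  have hwit := isWitness_oplus_map hκ hagree hinj₁
  set y₂ : GState D n U' := fun i => (v₂ i).map kh with hy₂
  have hinj₂ : Set.InjOn kh (adomF (oplusG v v₂) ∪ Set.range cst' ∪ actElems a) := by
    apply hinj.mono
    rw [adomF_oplusG, hA, hB]
    intro u hu; revert hu; simp only [Set.mem_union]; tauto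
  have hconst : ∀ c, kh (cst' c) = cst' c := fun c => by
    rw [hagree _ (Or.inr ⟨c, rfl⟩), hκ.2.1 c]
  have htau := hu'.1 v hv v₂ hv₂ y hy y₂ a hτ kh hwit kh (fun u _ => rfl) hinj₂ hconst
  exact ⟨y₂, kh, ⟨_, htau⟩, M'.tau_closed y hy _ htau, hwit, hagree⟩

/-- Transfer an epistemic transition along a witness, inside a uniform system. -/
lemma transfer_epi (M' : ACMAS D sig' Ag') (hu' : Uniform cst' M')
    {v y v₂ : GState D n U'} {j : Fin n}
    (hv : v ∈ M'.S) (hv₂ : v₂ ∈ M'.S) (hy : y ∈ M'.S) (hepi : M'.Epi j.succ v v₂)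
    {κ : U' → U'} (hκ : IsWitness cst' cst' κ v y) :
    ∃ (y₂ : GState D n U') (kh : U' → U'), M'.Epi j.succ y y₂ ∧ y₂ ∈ M'.S ∧
      IsWitness cst' cst' kh (oplusG v v₂) (oplusG y y₂) ∧
      (∀ u ∈ adomF v ∪ Set.range cst', kh u = κ u) := by
  set A : Set U' := adomF v ∪ Set.range cst' with hA
  have hAfin : A.Finite := (adomF_finite v).union (Set.finite_range cst')
  obtain ⟨kh, hagree, hinj⟩ := extend_injOn κ A (adomF v₂) hAfin (adomF_finite v₂)
    (hκ.1.2.1) (Cardinal.mk_set_le _)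
  have hwit := isWitness_oplus_map hκ hagree hinj
  set y₂ : GState D n U' := fun i => (v₂ i).map kh with hy₂
  have hEpi : M'.Epi j.succ y y₂ :=
    hu'.2 v hv v₂ hv₂ y hy y₂ j hepi ⟨kh, hwit⟩
  exact ⟨y₂, kh, hEpi, hEpi.2.1, hwit, hagree⟩

end Transfer


/-! ### Composition of an ⊕-bisimulation with isomorphism on the primed side -/

section WComp

open Set

variable {D : Schema} {C : Type} [Fintype C] {n : ℕ}
  {sig sig' : Fin (n+1) → AgentSig} {U U' : Type} {cst : C → U} {cst' : C → U'}
  {Ag : ∀ i, Agent D (sig i) U} {Ag' : ∀ i, Agent D (sig' i) U'}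

lemma isOBisim_comp_iso {M : ACMAS D sig Ag} {M' : ACMAS D sig' Ag'}
    {R : GState D n U → GState D n U' → Prop}
    (hR : IsOBisim cst cst' M M' R) (hu' : Uniform cst' M') :
    IsOBisim cst cst' M M'
      (fun p q => ∃ v, R p v ∧ v ∈ M'.S ∧ q ∈ M'.S ∧ Iso cst' cst' v q) := by
  constructor
  · -- forward simulation
    rintro p q ⟨v, hRv, hvS, hqS, κ, hκ⟩
    obtain ⟨hpS, -, ⟨ι₀, hι₀⟩, hT, hE⟩ := hR.1 p v hRv
    refine ⟨hpS, hqS, ⟨κ ∘ ι₀, hι₀.comp hκ⟩, ?_, ?_⟩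
    · intro t htr
      obtain ⟨v₂, htrv₂, ⟨ι, hι⟩, hRt⟩ := hT t htr
      obtain ⟨a, hτ⟩ := htrv₂
      have hv₂S : v₂ ∈ M'.S := M'.tau_closed v hvS a hτ
      obtain ⟨y₂, kh, hTr, hy₂S, hwit, -⟩ := transfer_tr M' hu' hvS hv₂S hqS hτ hκ
      exact ⟨y₂, hTr, ⟨kh ∘ ι, hι.comp hwit⟩,
        v₂, hRt, hv₂S, hy₂S, ⟨kh, hwit.oplus_snd⟩⟩
    · intro t j hepi
      obtain ⟨v₂, hepiv₂, ⟨ι, hι⟩, hRt⟩ := hE t j hepi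
      have hv₂S : v₂ ∈ M'.S := hepiv₂.2.1
      obtain ⟨y₂, kh, hEpi, hy₂S, hwit, -⟩ := transfer_epi M' hu' hvS hv₂S hqS hepiv₂ hκ
      exact ⟨y₂, hEpi, ⟨kh ∘ ι, hι.comp hwit⟩,
        v₂, hRt, hv₂S, hy₂S, ⟨kh, hwit.oplus_snd⟩⟩
  · -- backward simulation
    rintro q p ⟨v, hRv, hvS, hqS, κ, hκ⟩
    obtain ⟨-, hpS, hIvp, hT', hE'⟩ := hR.2 v p hRv
    obtain ⟨μ, hμ, -⟩ := isWitness_source_comp hκ (isWitness_id v)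
    refine ⟨hqS, hpS, ?_, ?_, ?_⟩
    · obtain ⟨ιvp, hιvp⟩ := hIvp
      exact ⟨ιvp ∘ μ, hμ.comp hιvp⟩
    · intro y₂ htr
      obtain ⟨a, hτ⟩ := htr
      have hy₂S : y₂ ∈ M'.S := M'.tau_closed q hqS a hτ
      obtain ⟨v₂', kh, hTrv, hv₂'S, hwit, -⟩ := transfer_tr M' hu' hqS hy₂S hvS hτ hμ
      obtain ⟨u₂, hTru, ⟨ι', hι'⟩, hRu⟩ := hT' v₂' hTrv
      obtain ⟨ν, hν, -⟩ := isWitness_source_comp hwit.oplus_snd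
        (isWitness_id (cst := cst') y₂)
      exact ⟨u₂, hTru, ⟨ι' ∘ kh, hwit.comp hι'⟩,
        v₂', hRu, hv₂'S, hy₂S, ⟨ν, hν⟩⟩
    · intro y₂ j hepi
      have hy₂S : y₂ ∈ M'.S := hepi.2.1
      obtain ⟨v₂', kh, hEpiv, hv₂'S, hwit, -⟩ := transfer_epi M' hu' hqS hy₂S hvS hepi hμ
      obtain ⟨u₂, hEpiu, ⟨ι', hι'⟩, hRu⟩ := hE' v₂' j hEpiv
      obtain ⟨ν, hν, -⟩ := isWitness_source_comp hwit.oplus_snd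
        (isWitness_id (cst := cst') y₂)
      exact ⟨u₂, hEpiu, ⟨ι' ∘ kh, hwit.comp hι'⟩,
        v₂', hRu, hv₂'S, hy₂S, ⟨ν, hν⟩⟩

end WComp


/-! ### The main step lemma -/

section MainStep

open Set

variable {D : Schema} {C : Type} [Fintype C] {n : ℕ}
  {sig sig' : Fin (n+1) → AgentSig} {U U' : Type} {cst : C → U} {cst' : C → U'}
  {Ag : ∀ i, Agent D (sig i) U} {Ag' : ∀ i, Agent D (sig' i) U'}

set_option maxHeartbeats 2000000 in
lemma main_step {M : ACMAS D sig Ag} {M' : ACMAS D sig' Ag'}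
    (hu' : Uniform cst' M') {V : Set ℕ} {σ : ℕ → U} {σ' : ℕ → U'}
    (hVfin : (σ '' V).Finite)
    {s t : GState D n U} {s' : GState D n U'}
    (hstep : M.Tr s t ∨ M.EpiAny s t)
    (hobis : OBisimilar cst cst' M M' s s')
    (heq : EqAssign cst cst' V σ σ' s s')
    (hcard : Cardinal.mk ↥(adomF s ∪ adomF t ∪ Set.range cst ∪ σ '' V) ≤
      Cardinal.mk U') :
    ∃ t', (M.Tr s t → M'.Tr s' t') ∧
      (∀ j : Fin n, M.Epi j.succ s t → M'.Epi j.succ s' t') ∧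
      (M'.Tr s' t' ∨ M'.EpiAny s' t') ∧ t' ∈ M'.S ∧
      OBisimilar cst cst' M M' t t' ∧ EqAssign cst cst' V σ σ' t t' := by
  classical
  obtain ⟨R, hRbis, hRss'⟩ := hobis
  obtain ⟨γ, hγbij, hγw, hγσ⟩ := heq
  obtain ⟨hsS, hs'S, -, hT, hE⟩ := hRbis.1 s s' hRss'
  -- the base matched successor
  obtain ⟨t₁, ι, hι, hRt, ht₁S, hprim⟩ :
      ∃ (t₁ : GState D n U') (ι : U → U'),
        IsWitness cst cst' ι (oplusG s t) (oplusG s' t₁) ∧ R t t₁ ∧ t₁ ∈ M'.S ∧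
        ((∃ a', t₁ ∈ M'.τ s' a') ∨
          (¬ M.Tr s t ∧ ∃ j₀ : Fin n, M.Epi j₀.succ s t)) := by
    by_cases htr : M.Tr s t
    · obtain ⟨t₁, ⟨a', hτ'⟩, ⟨ι, hι⟩, hRt⟩ := hT t htr
      exact ⟨t₁, ι, hι, hRt, M'.tau_closed s' hs'S a' hτ', Or.inl ⟨a', hτ'⟩⟩
    · obtain ⟨j₀, hj₀⟩ := hstep.resolve_left htr
      obtain ⟨t₁, hepi₁, ⟨ι, hι⟩, hRt⟩ := hE t j₀ hj₀
      exact ⟨t₁, ι, hι, hRt, hepi₁.2.1, Or.inr ⟨htr, j₀, hj₀⟩⟩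
  -- extension δ of γ to adom t
  set A : Set U := adomF s ∪ Set.range cst ∪ σ '' V with hA
  have hAfin : A.Finite :=
    ((adomF_finite s).union (Set.finite_range cst)).union hVfin
  have hsetAB : A ∪ adomF t = adomF s ∪ adomF t ∪ Set.range cst ∪ σ '' V := by
    ext v; simp only [hA, Set.mem_union]; tauto
  obtain ⟨δ, hδγ, hδinj⟩ := extend_injOn γ A (adomF t) hAfin (adomF_finite t)
    hγbij.2.1 (by rw [hsetAB]; exact hcard)
  set domST : Set U := adomF (oplusG s t) ∪ Set.range cst with hdomST
  have hdomST' : domST = adomF s ∪ adomF t ∪ Set.range cst := by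
    rw [hdomST, adomF_oplusG]
  have hsub_s : adomF s ∪ Set.range cst ⊆ domST := by
    rw [hdomST']; intro v hv; revert hv; simp only [Set.mem_union]; tauto
  have hsub_t : adomF t ∪ Set.range cst ⊆ domST := by
    rw [hdomST']; intro v hv; revert hv; simp only [Set.mem_union]; tauto
  have hsubSTAB : domST ⊆ A ∪ adomF t := by
    rw [hdomST', hA]; intro v hv; revert hv; simp only [Set.mem_union]; tauto
  -- the correcting map ζ on U'
  set ζ : U' → U' :=
    fun v => if h : ∃ u, u ∈ domST ∧ ι u = v then δ h.choose else v with hζ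
  have hζι : ∀ u ∈ domST, ζ (ι u) = δ u := by
    intro u hu
    have hex : ∃ u₀, u₀ ∈ domST ∧ ι u₀ = ι u := ⟨u, hu, rfl⟩
    simp only [hζ, dif_pos hex]
    have hspec := hex.choose_spec
    rw [hι.1.2.1 hspec.1 hu hspec.2]
  have hδA : ∀ u ∈ A, δ u = γ u := hδγ
  -- ζ is a witness s' ≃ s'
  have hι_fst : IsWitness cst cst' ι s s' := hι.oplus_fst
  obtain ⟨μ, hμ, hμval⟩ := isWitness_source_comp hι_fst hγw
  have hW : IsWitness cst' cst' ζ s' s' := by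
    apply hμ.congr
    intro v hv
    obtain ⟨u, hu, rfl⟩ := hι_fst.1.image_eq ▸ hv
    rw [hζι u (hsub_s hu), hδA u (by revert hu; rw [hA]; simp only [Set.mem_union]; tauto),
      hμval u hu]
  -- ζ is injective where needed
  have himgdom : ι '' domST = adomF s' ∪ Set.range cst' ∪ adomF t₁ := by
    rw [hdomST, hι.1.image_eq, adomF_oplusG]
    ext v; simp only [Set.mem_union]; tauto
  have hinjζ : Set.InjOn ζ (adomF s' ∪ Set.range cst' ∪ adomF t₁) := by
    rw [← himgdom]
    rintro v ⟨u, hu, rfl⟩ w ⟨u', hu', rfl⟩ hvw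
    rw [hζι u hu, hζι u' hu'] at hvw
    rw [hδinj (hsubSTAB hu) (hsubSTAB hu') hvw]
  have hwit_oplus := isWitness_oplus_map hW (fun v _ => rfl) hinjζ
  set t'' : GState D n U' := fun i => (t₁ i).map ζ with ht''
  -- epistemic transfer
  have hcompwit : IsWitness cst cst' (ζ ∘ ι) (oplusG s t) (oplusG s' t'') :=
    hι.comp hwit_oplus
  have hEpiT : ∀ j : Fin n, M.Epi j.succ s t → M'.Epi j.succ s' t'' := by
    intro j hj
    obtain ⟨t₁j, hepi₁, ⟨ιj, hιj⟩, -⟩ := hE t j hj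
    obtain ⟨ν, hν, -⟩ := isWitness_source_comp hιj hcompwit
    exact hu'.2 s' hs'S t₁j hepi₁.2.1 s' hs'S t'' j hepi₁ ⟨ν, hν⟩
  -- temporal transfer
  have hζconst : ∀ c, ζ (cst' c) = cst' c := by
    intro c
    have h1 : ζ (ι (cst c)) = δ (cst c) := hζι _ (hsub_s (Or.inr ⟨c, rfl⟩))
    rw [hι.2.1 c] at h1
    rw [h1, hδA _ (Or.inl (Or.inr ⟨c, rfl⟩)), hγw.2.1 c]
  have hTrT : (∃ a', t₁ ∈ M'.τ s' a') → M'.Tr s' t'' := by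
    rintro ⟨a', hτ'⟩
    have hdset : adomF (oplusG s' t₁) ∪ Set.range cst' =
        adomF s' ∪ Set.range cst' ∪ adomF t₁ := by
      rw [adomF_oplusG]; ext v; simp only [Set.mem_union]; tauto
    obtain ⟨ζ', hζ'agree, hζ'inj⟩ := extend_injOn ζ
      (adomF (oplusG s' t₁) ∪ Set.range cst') (actElems a')
      ((adomF_finite _).union (Set.finite_range cst'))
      (actElems_finite a')
      (by rw [hdset]; exact hinjζ) (Cardinal.mk_set_le _)
    have hζ'const : ∀ c, ζ' (cst' c) = cst' c := fun c => by
      rw [hζ'agree _ (Or.inr ⟨c, rfl⟩), hζconst c]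
    exact ⟨JAct.map ζ' a',
      hu'.1 s' hs'S t₁ ht₁S s' hs'S t'' a' hτ' ζ hwit_oplus ζ' hζ'agree hζ'inj hζ'const⟩
  -- membership of t''
  have ht''S : t'' ∈ M'.S := by
    rcases hprim with ⟨a', hτ'⟩ | ⟨-, j₀, hj₀⟩
    · obtain ⟨a'', hτ''⟩ := hTrT ⟨a', hτ'⟩
      exact M'.tau_closed s' hs'S a'' hτ''
    · exact (hEpiT j₀ hj₀).2.1
  -- image computations for δ
  have hι_snd : IsWitness cst cst' ι t t₁ := hι.oplus_snd
  have himgt : δ '' adomF t = adomF t'' := by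
    rw [ht'', adomF_map, ← hι_snd.image_adomF, Set.image_image]
    exact (Set.image_congr fun u hu =>
      (hζι u (hsub_t (Or.inl hu))).symm)
  have himgc : δ '' Set.range cst = Set.range cst' := by
    rw [Set.image_congr fun u hu => hδA u (Or.inl (Or.inr hu))]
    ext v
    constructor
    · rintro ⟨u, ⟨c, rfl⟩, rfl⟩
      exact ⟨c, (hγw.2.1 c).symm⟩
    · rintro ⟨c, rfl⟩
      exact ⟨cst c, ⟨c, rfl⟩, hγw.2.1 c⟩
  have himgσ : δ '' (σ '' V) = σ' '' V := by
    rw [Set.image_congr fun u hu => hδA u (Or.inr hu)]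
    ext v
    constructor
    · rintro ⟨u, ⟨x, hx, rfl⟩, rfl⟩
      exact ⟨x, hx, hγσ x hx⟩
    · rintro ⟨x, hx, rfl⟩
      exact ⟨σ x, ⟨x, hx, rfl⟩, (hγσ x hx).symm⟩
  -- EqAssign for (t, t'')
  have hδinj₁ : Set.InjOn δ (adomF t ∪ Set.range cst ∪ σ '' V) := by
    apply hδinj.mono
    intro v hv; revert hv; simp only [hA, Set.mem_union]; tauto
  have hδinj₂ : Set.InjOn δ (adomF t ∪ Set.range cst) := by
    apply hδinj.mono
    intro v hv; revert hv; simp only [hA, Set.mem_union]; tauto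
  have heqA : EqAssign cst cst' V σ σ' t t'' := by
    refine ⟨δ, ?_, ⟨?_, fun c => ?_, fun i r τ hdom => ?_⟩, fun x hx => ?_⟩
    · have himg : δ '' (adomF t ∪ Set.range cst ∪ σ '' V) =
          adomF t'' ∪ Set.range cst' ∪ σ' '' V := by
        rw [Set.image_union, Set.image_union, himgt, himgc, himgσ]
      rw [← himg]
      exact hδinj₁.bijOn_image
    · have himg : δ '' (adomF t ∪ Set.range cst) =
          adomF t'' ∪ Set.range cst' := by
        rw [Set.image_union, himgt, himgc]
      rw [← himg]
      exact hδinj₂.bijOn_image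
    · rw [hδA _ (Or.inl (Or.inr ⟨c, rfl⟩)), hγw.2.1 c]
    · have h1 : τ ∈ (t i).rel r ↔ (fun j => ι (τ j)) ∈ (t₁ i).rel r :=
        hι_snd.2.2 i r τ hdom
      have h2 : (fun j => ι (τ j)) ∈ (t₁ i).rel r ↔
          (fun j => ζ (ι (τ j))) ∈ (t'' i).rel r := by
        constructor
        · intro hmem
          exact ⟨_, hmem, rfl⟩
        · rintro ⟨τ₀, hτ₀, heqq⟩
          have hmem' : ∀ j, ι (τ j) ∈ adomF s' ∪ Set.range cst' ∪ adomF t₁ := by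
            intro j
            rw [← himgdom]
            exact Set.mem_image_of_mem ι (hsub_t (hdom j))
          have : τ₀ = fun j => ι (τ j) := by
            funext j
            exact hinjζ (Or.inr (mem_adomF_of_rel hτ₀ j)) (hmem' j) (congrFun heqq j)
          rw [← this]
          exact hτ₀
      have h3 : (fun j => ζ (ι (τ j))) = fun j => δ (τ j) :=
        funext fun j => hζι _ (hsub_t (hdom j))
      rw [← h3]
      exact h1.trans h2
    · rw [hδA _ (Or.inr ⟨x, hx, rfl⟩)]
      exact hγσ x hx
  refine ⟨t'', ?_, hEpiT, ?_, ht''S,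
    ⟨_, isOBisim_comp_iso hRbis hu',
      t₁, hRt, ht₁S, ht''S, ⟨ζ, hwit_oplus.oplus_snd⟩⟩, heqA⟩
  · intro htr
    rcases hprim with h | ⟨hntr, -⟩
    · exact hTrT h
    · exact absurd htr hntr
  · rcases hprim with h | ⟨-, j₀, hj₀⟩
    · exact Or.inl (hTrT h)
    · exact Or.inr ⟨j₀, hEpiT j₀ hj₀⟩

end MainStep

/-! ### STATEMENT 9 -/

theorem statement9
    {D : Schema} {C : Type} [Fintype C] {n : ℕ}
    {sig sig' : Fin (n+1) → AgentSig} {U U' : Type}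
    (cst : C → U) (cst' : C → U')
    (hcst : Function.Injective cst) (hcst' : Function.Injective cst')
    {Ag : ∀ i, Agent D (sig i) U} {Ag' : ∀ i, Agent D (sig' i) U'}
    (M : ACMAS D sig Ag) (M' : ACMAS D sig' Ag')
    (hM : M.Std) (hM' : M'.Std)
    (hu : Uniform cst M) (hu' : Uniform cst' M')
    (hsys : OBisimSys cst cst' M M')
    (s : GState D n U) (s' : GState D n U')
    (hss' : OBisimilar cst cst' M M' s s')
    (φ : FOCTLK D C n) (σ : ℕ → U) (σ' : ℕ → U')
    (heq : EqAssign cst cst' ↑φ.free σ σ' s s')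
    (r : ℕ → GState D n U) (hr : M.IsTERun r) (hr0 : r 0 = s)
    (hcard : ∀ i : ℕ,
      Cardinal.mk ↥(adomF (r i) ∪ adomF (r (i+1)) ∪ Set.range cst ∪ σ '' ↑φ.free) ≤
        Cardinal.mk U') :
    ∃ r' : ℕ → GState D n U', M'.IsTERun r' ∧ r' 0 = s' ∧
      (∀ i, OBisimilar cst cst' M M' (r i) (r' i)) ∧
      (∀ i, EqAssign cst cst' ↑φ.free σ σ' (r i) (r' i)) ∧
      (∀ i, (M.Tr (r i) (r (i+1)) → M'.Tr (r' i) (r' (i+1))) ∧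
        ∀ j : Fin n, M.Epi j.succ (r i) (r (i+1)) →
          M'.Epi j.succ (r' i) (r' (i+1))) := by
  classical
  have hVfin : (σ '' ↑φ.free).Finite := (φ.free.finite_toSet).image σ
  set Inv : ℕ → GState D n U' → Prop := fun i q =>
    q ∈ M'.S ∧ OBisimilar cst cst' M M' (r i) q ∧
    EqAssign cst cst' ↑φ.free σ σ' (r i) q with hInv
  have hs'S : s' ∈ M'.S := by
    obtain ⟨R, hRb, hRs⟩ := hss'
    exact (hRb.1 s s' hRs).2.1
  have base : Inv 0 s' := by
    refine ⟨hs'S, ?_, ?_⟩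
    · rw [hr0]; exact hss'
    · rw [hr0]; exact heq
  have key : ∀ i q, Inv i q → ∃ q', Inv (i+1) q' ∧
      (M.Tr (r i) (r (i+1)) → M'.Tr q q') ∧
      (∀ j : Fin n, M.Epi j.succ (r i) (r (i+1)) → M'.Epi j.succ q q') ∧
      (M'.Tr q q' ∨ M'.EpiAny q q') := by
    rintro i q ⟨hqS, hob, heqi⟩
    obtain ⟨t', h1, h2, h3, h4, h5, h6⟩ :=
      main_step hu' hVfin (hr.2 i) hob heqi (hcard i)
    exact ⟨t', ⟨h4, h5, h6⟩, h1, h2, h3⟩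
  let g : ∀ i : ℕ, {q : GState D n U' // Inv i q} := fun i =>
    Nat.rec ⟨s', base⟩
      (fun k p => ⟨(key k p.1 p.2).choose, (key k p.1 p.2).choose_spec.1⟩) i
  have hsp : ∀ i, (M.Tr (r i) (r (i+1)) → M'.Tr (g i).1 (g (i+1)).1) ∧
      (∀ j : Fin n, M.Epi j.succ (r i) (r (i+1)) →
        M'.Epi j.succ (g i).1 (g (i+1)).1) ∧
      (M'.Tr (g i).1 (g (i+1)).1 ∨ M'.EpiAny (g i).1 (g (i+1)).1) := by
    intro i
    exact (key i (g i).1 (g i).2).choose_spec.2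
  refine ⟨fun i => (g i).1, ⟨fun k => (g k).2.1, fun k => (hsp k).2.2⟩, rfl,
    fun i => (g i).2.2.1, fun i => (g i).2.2.2,
    fun i => ⟨(hsp i).1, (hsp i).2.1⟩⟩
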